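/- arXiv:2103.09747 — 3 statements merged into one kernel-verified Lean document; each statement's English description precedes it below -/
import Mathlib

section
/- The 2×2 matrix A = [[-1, 3/2], [1/3, -1]] satisfies: its second column sum equals 1/2 > 0 (so the system x' = Ax is reactive in the ℓ1 norm), but the largest eigenvalue of (A+Aᵀ)/2 equals -1 + 11/12 < 0 (so the system is not reactive in the ℓ2 norm); moreover both eigenvalues of A are negative, so the origin is asymptotically stable. -/
open Matrix Polynomial

lemma charpoly_fin_two' {R : Type*} [CommRing R] (M : Matrix (Fin 2) (Fin 2) R) :
    M.charpoly = X^2 - C (M 0 0 + M 1 1) * X + C (M 0 0 * M 1 1 - M 0 1 * M 1 0) := by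
  rw [Matrix.charpoly, Matrix.det_fin_two]
  simp [charmatrix_apply_eq, charmatrix_apply_ne]
  ring

/-- The matrix `A = [[-1,3/2],[1/3,-1]]` has second column sum `1/2 > 0`
(reactive in ℓ1), largest eigenvalue of `(A+Aᵀ)/2` equal to `-1 + 11/12 < 0`
(not reactive in ℓ2), and all eigenvalues of `A` have negative real part
(asymptotically stable origin). -/
theorem stmt7 :
    (∑ i, (!![(-1 : ℝ), 3/2; 1/3, -1]) i 1 = 1/2) ∧ (0 : ℝ) < 1/2 ∧
    IsGreatest {μ : ℝ |
        (((2 : ℝ)⁻¹ • (!![(-1 : ℝ), 3/2; 1/3, -1] + !![(-1 : ℝ), 3/2; 1/3, -1]ᵀ)).charpoly).IsRoot μ}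
      (-1 + 11/12) ∧ (-1 + 11/12 : ℝ) < 0 ∧
    (∀ μ : ℂ, (((!![(-1 : ℝ), 3/2; 1/3, -1]).map (Complex.ofReal)).charpoly).IsRoot μ →
      μ.re < 0) := by
  refine ⟨by simp [Fin.sum_univ_two]; norm_num, by norm_num, ?_, by norm_num, ?_⟩
  · have hT : (!![(-1 : ℝ), 3/2; 1/3, -1])ᵀ = !![(-1 : ℝ), 1/3; 3/2, -1] := by
      ext i j; fin_cases i <;> fin_cases j <;> rfl
    constructor
    · simp only [Set.mem_setOf_eq, IsRoot, charpoly_fin_two', hT]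
      simp [Matrix.smul_apply, Matrix.add_apply]
      norm_num
    · intro μ hμ
      simp only [Set.mem_setOf_eq, IsRoot, charpoly_fin_two', hT] at hμ
      simp [Matrix.smul_apply, Matrix.add_apply] at hμ
      have h : (μ + 1)^2 = (11/12)^2 := by nlinarith
      nlinarith [sq_nonneg (μ + 1 - 11/12)]
  · intro μ hμ
    simp only [IsRoot, charpoly_fin_two', Matrix.map_apply] at hμ
    simp at hμ
    have h : (μ + 1)^2 = 1/2 := by
      ring_nf at hμ ⊢
      linear_combination hμ
    set x := μ + 1 with hx
    have hre : x.re * x.re - x.im * x.im = 1/2 := by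
      have := congrArg Complex.re h
      simpa [sq, Complex.mul_re] using this
    have him : x.re * x.im + x.im * x.re = 0 := by
      have := congrArg Complex.im h
      simpa [sq, Complex.mul_im] using this
    have hxim : x.im = 0 := by
      by_contra hb
      have hr0 : x.re = 0 := by
        rcases mul_eq_zero.mp (by linarith : x.im * x.re = 0) with h' | h'
        · exact absurd h' hb
        · exact h'
      rw [hr0] at hre
      nlinarith [sq_nonneg x.im]
    have hlt : x.re < 1 := by nlinarith
    have hμre : μ.re = x.re - 1 := by
      simp [hx]
    linarith
end

section
/- Let A = F − V where F is a nonnegative n×n matrix and V is a nonsingular M-matrix of block lower-triangular form V = [[V₁₁, 0],[V₂₁, D]] with V₁₁ of size k×k and D = diag(d_{k+1},…,d_n), dⱼ > 0. Let K = F V⁻¹ be the next-generation matrix with column sums Rⱼ, and let λⱼ be the j-th column sum of A. Then for each j with k+1 ≤ j ≤ n, λⱼ = (Rⱼ − 1) dⱼ; in particular λⱼ > 0 if and only if Rⱼ > 1. -/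
open Matrix

/-- Source/sink vs. initial-growth correspondence: if `A = F − V` with `F ≥ 0`
and `V` a nonsingular M-matrix whose columns `j ≥ k` are `dⱼ eⱼ` with `dⱼ > 0`
(block form `V = [[V₁₁,0],[V₂₁,D]]`), then for `j ≥ k` the column sum
`λⱼ` of `A` satisfies `λⱼ = (Rⱼ − 1) dⱼ`, where `Rⱼ` is the `j`-th column sum of
`K = F V⁻¹`; in particular `λⱼ > 0 ↔ Rⱼ > 1`. -/
theorem stmt10 {n k : ℕ} (hkn : k ≤ n) (F V : Matrix (Fin n) (Fin n) ℝ)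
    (hF : ∀ i j, 0 ≤ F i j)
    (hVoff : ∀ i j, i ≠ j → V i j ≤ 0)
    (hVunit : IsUnit V.det)
    (hVinv : ∀ i j, 0 ≤ V⁻¹ i j)
    (hblock : ∀ i j : Fin n, k ≤ (j : ℕ) → i ≠ j → V i j = 0)
    (hdiag : ∀ j : Fin n, k ≤ (j : ℕ) → 0 < V j j) :
    ∀ j : Fin n, k ≤ (j : ℕ) →
      (∑ i, (F - V) i j = ((∑ i, (F * V⁻¹) i j) - 1) * V j j) ∧
      (0 < ∑ i, (F - V) i j ↔ 1 < ∑ i, (F * V⁻¹) i j) := by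
  intro j hj
  have hFV : F * V⁻¹ * V = F := by
    rw [Matrix.mul_assoc, Matrix.nonsing_inv_mul V hVunit, Matrix.mul_one]
  -- column sum of F equals d_j * column sum of F V⁻¹
  have hFcol : ∀ i, F i j = (F * V⁻¹) i j * V j j := by
    intro i
    conv_lhs => rw [← hFV]
    rw [Matrix.mul_apply]
    exact Finset.sum_eq_single j (fun l _ hl => by
      rw [hblock l j hj hl, mul_zero]) (fun h => absurd (Finset.mem_univ j) h)
  -- column sum of V is V j j
  have hVcol : ∑ i, V i j = V j j := by
    exact Finset.sum_eq_single j (fun l _ hl => hblock l j hj hl)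
      (fun h => absurd (Finset.mem_univ j) h)
  have key : ∑ i, (F - V) i j = ((∑ i, (F * V⁻¹) i j) - 1) * V j j := by
    simp only [Matrix.sub_apply, Finset.sum_sub_distrib, hVcol]
    rw [show (∑ x, F x j) = ∑ x, (F * V⁻¹) x j * V j j from
      Finset.sum_congr rfl (fun i _ => hFcol i), ← Finset.sum_mul, sub_mul, one_mul]
  refine ⟨key, ?_⟩
  rw [key]
  constructor
  · intro h
    by_contra hle
    push_neg at hle
    have : ((∑ i, (F * V⁻¹) i j) - 1) * V j j ≤ 0 :=
      mul_nonpos_of_nonpos_of_nonneg (by linarith) (hdiag j hj).le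
    linarith
  · intro h
    exact mul_pos (by linarith) (hdiag j hj)
end

section
/- For the system x' = −x + (ε/2)y, y' = (1/ε)x − y with x(0)=1, y(0)=0 and ε > 0, the maximum over time of the total population x(t)+y(t) tends to infinity as ε → 0⁺. Concretely, y attains its maximum at t_max = (1/√2)(log(1+√2) − log(√2−1)) with y(t_max) = (√2/ε)(1+√2)^{−1/2−1/√2}(√2−1)^{1/√2−1/2}, and since x(t) > 0 for all t, max_t (x(t)+y(t)) > y(t_max) → ∞ as ε → 0⁺. -/
/-- Explicit solution of the stable reactive two-patch system. -/
noncomputable def xSol (t : ℝ) : ℝ :=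
  (1 / 2) * (Real.exp (-(1 - 1 / Real.sqrt 2) * t) + Real.exp (-(1 + 1 / Real.sqrt 2) * t))

noncomputable def ySol (ε t : ℝ) : ℝ :=
  (1 / (Real.sqrt 2 * ε)) * (Real.exp (-(1 - 1 / Real.sqrt 2) * t) -
    Real.exp (-(1 + 1 / Real.sqrt 2) * t))

/-- The time at which `y` attains its maximum. -/
noncomputable def tMax : ℝ :=
  (1 / Real.sqrt 2) * (Real.log (1 + Real.sqrt 2) - Real.log (Real.sqrt 2 - 1))

/-!
With `a = 1 - 1/√2 < b = 1 + 1/√2`, `y` is a positive multiple of `exp (-a t) - exp (-b t)`.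
Any critical point `s` of this function (`a e^{-as} = b e^{-bs}`) is a global maximum: after the
shift `u = t - s` the inequality `f t ≤ f s` becomes convexity of `exp` between `-b u` and `0`
with weights `a / b` and `1 - a / b`. At `tMax` one has `e^{-a tMax} = (1 + √2) P` and
`e^{-b tMax} = (√2 - 1) P` with `P = peakFactor`, so `tMax` is critical and
`y(tMax) = √2 P / ε`, which blows up as `ε → 0⁺`.
-/

open Real

theorem exp_neg_mul_sub_exp_neg_mul_le_of_critical {a b s : ℝ} (ha : 0 < a) (hab : a ≤ b)
    (hs : a * exp (-a * s) = b * exp (-b * s)) (t : ℝ) :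
    exp (-a * t) - exp (-b * t) ≤ exp (-a * s) - exp (-b * s) := by
  have hb : 0 < b := ha.trans_le hab
  have hconv : exp (-a * (t - s)) ≤ a / b * exp (-b * (t - s)) + (1 - a / b) := by
    have h := convexOn_exp.2 (Set.mem_univ (-b * (t - s))) (Set.mem_univ 0)
      (div_pos ha hb).le (sub_nonneg.2 ((div_le_one hb).2 hab)) (add_sub_cancel _ _)
    rwa [smul_eq_mul, smul_eq_mul, smul_eq_mul, smul_eq_mul, mul_zero, add_zero, exp_zero,
      mul_one, show a / b * (-b * (t - s)) = -a * (t - s) by field_simp] at h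
  have hcrit : exp (-a * s) * (a / b) = exp (-b * s) := by
    rw [mul_div_assoc', mul_comm, hs, mul_div_cancel_left₀ _ hb.ne']
  have hA : exp (-a * t) = exp (-a * s) * exp (-a * (t - s)) := by rw [← exp_add]; ring_nf
  have hB : exp (-b * t) = exp (-b * s) * exp (-b * (t - s)) := by rw [← exp_add]; ring_nf
  rw [hA, hB, ← hcrit]
  linarith [mul_le_mul_of_nonneg_left hconv (exp_pos (-a * s)).le]

noncomputable def peakFactor : ℝ :=
  (1 + √2) ^ (-(1 / 2 : ℝ) - 1 / √2) * (√2 - 1) ^ ((1 / √2 : ℝ) - 1 / 2)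

lemma peakFactor_pos : 0 < peakFactor := by
  have := one_lt_sqrt_two
  unfold peakFactor
  exact mul_pos (rpow_pos_of_pos (by linarith) _) (rpow_pos_of_pos (by linarith) _)

lemma exp_neg_mul_tMax_left : exp (-(1 - 1 / √2) * tMax) = (1 + √2) * peakFactor := by
  have h := one_lt_sqrt_two
  have h2 : 1 / √2 * (1 / √2) = 1 / 2 := by
    rw [div_mul_div_comm, one_mul, mul_self_sqrt zero_le_two]
  rw [peakFactor, rpow_def_of_pos (by linarith), rpow_def_of_pos (by linarith),
    ← exp_log (show 0 < 1 + √2 by linarith), ← exp_add, ← exp_add, exp_log (by linarith)]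
  unfold tMax
  congr 1
  linear_combination (log (1 + √2) - log (√2 - 1)) * h2

lemma exp_neg_mul_tMax_right : exp (-(1 + 1 / √2) * tMax) = (√2 - 1) * peakFactor := by
  have h := one_lt_sqrt_two
  have h2 : 1 / √2 * (1 / √2) = 1 / 2 := by
    rw [div_mul_div_comm, one_mul, mul_self_sqrt zero_le_two]
  rw [peakFactor, rpow_def_of_pos (by linarith), rpow_def_of_pos (by linarith),
    ← exp_log (show 0 < √2 - 1 by linarith), ← exp_add, ← exp_add, exp_log (by linarith)]
  unfold tMax
  congr 1
  linear_combination (log (√2 - 1) - log (1 + √2)) * h2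

lemma tMax_isCritical :
    (1 - 1 / √2) * exp (-(1 - 1 / √2) * tMax) = (1 + 1 / √2) * exp (-(1 + 1 / √2) * tMax) := by
  rw [exp_neg_mul_tMax_left, exp_neg_mul_tMax_right]
  field_simp
  ring

lemma isMaxOn_ySol_tMax {ε : ℝ} (hε : 0 ≤ ε) : IsMaxOn (ySol ε) Set.univ tMax := by
  have hinv : 0 < 1 / √2 := by positivity
  have ha : 0 < 1 - 1 / √2 := sub_pos.2 ((div_lt_one (by positivity)).2 one_lt_sqrt_two)
  have hab : 1 - 1 / √2 ≤ 1 + 1 / √2 := by linarith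
  intro t _
  exact mul_le_mul_of_nonneg_left
    (exp_neg_mul_sub_exp_neg_mul_le_of_critical ha hab tMax_isCritical t) (by positivity)

lemma ySol_tMax (ε : ℝ) : ySol ε tMax = √2 / ε * peakFactor := by
  have h2 : (√2)⁻¹ * 2 = √2 := by
    rw [inv_mul_eq_div, div_eq_iff (by positivity), ← sq, sq_sqrt (by norm_num)]
  rw [ySol, exp_neg_mul_tMax_left, exp_neg_mul_tMax_right]
  simp only [div_eq_mul_inv, one_mul, mul_inv]
  linear_combination (ε⁻¹ * peakFactor) * h2

lemma xSol_pos (t : ℝ) : 0 < xSol t := by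
  unfold xSol
  positivity

open Filter Topology in
lemma tendsto_ySol_tMax : Tendsto (fun ε => ySol ε tMax) (𝓝[>] 0) atTop := by
  simp only [ySol_tMax, div_eq_mul_inv, mul_right_comm _ _ peakFactor]
  exact tendsto_inv_nhdsGT_zero.const_mul_atTop (by positivity [peakFactor_pos])

/-- For the system `x' = −x + (ε/2)y`, `y' = (1/ε)x − y`, `x(0)=1`, `y(0)=0`:
`y` attains its maximum at `tMax`, with the stated explicit value, `x` is
positive, and the maximal total population exceeds `y(tMax)`, which tends to
infinity as `ε → 0⁺`; hence `maxₜ (x+y)` tends to infinity. -/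
theorem stmt14 :
    (∀ ε : ℝ, 0 < ε → IsMaxOn (ySol ε) Set.univ tMax) ∧
    (∀ ε : ℝ, 0 < ε → ySol ε tMax =
      (Real.sqrt 2 / ε) * (1 + Real.sqrt 2) ^ (-(1 / 2 : ℝ) - 1 / Real.sqrt 2) *
        (Real.sqrt 2 - 1) ^ ((1 / Real.sqrt 2 : ℝ) - 1 / 2)) ∧
    (∀ t : ℝ, 0 < xSol t) ∧
    (∀ ε : ℝ, 0 < ε → ySol ε tMax < xSol tMax + ySol ε tMax) ∧
    Filter.Tendsto (fun ε : ℝ => xSol tMax + ySol ε tMax)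
      (nhdsWithin 0 (Set.Ioi 0)) Filter.atTop :=
  ⟨fun _ hε => isMaxOn_ySol_tMax hε.le,
    fun ε _ => by rw [ySol_tMax, peakFactor, mul_assoc],
    xSol_pos,
    fun _ _ => lt_add_of_pos_left _ (xSol_pos tMax),
    Filter.tendsto_atTop_add_const_left _ _ tendsto_ySol_tMax⟩
end
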